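/- Let (R,m) be a Noetherian local commutative ring of prime characteristic p with depth R = 0, and let c(R) be the smallest positive integer s such that the socle (0:m)_R is not contained in m^s. Let r be an integer with p^r > c(R). If L_• is a chain complex of finitely generated free R-modules, indexed by the natural numbers, whose differentials d satisfy d(L_{n+1}) ⊆ m·L_n for all n, then for every j, the j-th homology of the complex L_• ⊗_R ^{φ^r}R vanishes if and only if L_j = 0. -/

import Mathlib

open CategoryTheory

universe u

/-- `R` viewed as a module over itself by restriction of scalars along a ring
endomorphism `f : R →+* R` (here `f` will be the `r`-th Frobenius power `a ↦ a ^ p ^ r`),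
i.e. the module `^{φ^r}R` with action `a · b = f a * b = a ^ p ^ r * b`. -/
noncomputable abbrev frobMod {R : Type u} [CommRing R] (f : R →+* R) : ModuleCat.{u} R :=
  (ModuleCat.restrictScalars f).obj (ModuleCat.of R R)

/-- The depth of a commutative ring `R` with respect to an ideal `I` (take `I = m`):
the supremum of lengths of `R`-regular sequences contained in `I`. -/
noncomputable def depthWrt (R : Type u) [CommRing R] (I : Ideal R) : ℕ∞ :=
  sSup {n : ℕ∞ | ∃ rs : List R, (∀ y ∈ rs, y ∈ I) ∧
    RingTheory.Sequence.IsRegular R rs ∧ (rs.length : ℕ∞) = n}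

/-!
Choose `u` in the socle with `u ∉ m ^ c` and a basis vector `e` of `L_j`. For `a ∈ m` we have
`a • u = a ^ p ^ r * u = 0` in `^{φ^r}R`, and the differentials land in `m • L`, so `e ⊗ u` is a
cycle of `L ⊗ ^{φ^r}R`. The coordinate functional of `e`, tensored with `^{φ^r}R` and followed by
`R ⊗ ^{φ^r}R ≅ ^{φ^r}R`, sends `e ⊗ u` to `u` but every boundary into `m • ^{φ^r}R`, whose
elements lie in the ideal generated by `m ^ [p ^ r] ⊆ m ^ p ^ r ⊆ m ^ c`. Hence `e ⊗ u` is not a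
boundary.
-/

open TensorProduct LinearMap

namespace TensorProduct

variable {R N N' M : Type*} [CommRing R] [AddCommGroup N] [Module R N] [AddCommGroup N']
  [Module R N'] [AddCommGroup M] [Module R M] {I : Ideal R}

theorem tmul_eq_zero_of_mem_smul_top {u : M} (hu : ∀ a ∈ I, a • u = 0) {x : N}
    (hx : x ∈ I • (⊤ : Submodule R N)) : x ⊗ₜ[R] u = 0 := by
  refine Submodule.smul_induction_on hx (fun a ha y _ => ?_) fun y y' hy hy' => ?_
  · rw [smul_tmul, hu a ha, tmul_zero]
  · rw [add_tmul, hy, hy', add_zero]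

theorem lid_rTensor_mem_smul_top {ψ : N →ₗ[R] R} (hψ : range ψ ≤ I) (z : N ⊗[R] M) :
    TensorProduct.lid R M (ψ.rTensor M z) ∈ I • (⊤ : Submodule R M) := by
  induction z using TensorProduct.induction_on with
  | zero => simp
  | tmul x w => simpa using Submodule.smul_mem_smul (hψ ⟨x, rfl⟩) Submodule.mem_top
  | add z z' hz hz' => simpa using add_mem hz hz'

theorem mem_smul_top_of_tmul_mem_range_rTensor {g : N' →ₗ[R] N}
    (hg : range g ≤ I • (⊤ : Submodule R N)) {ψ : N →ₗ[R] R} {x : N} (hx : ψ x = 1) {u : M}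
    (h : x ⊗ₜ[R] u ∈ range (g.rTensor M)) : u ∈ I • (⊤ : Submodule R M) := by
  obtain ⟨z, hz⟩ := h
  have hψg : range (ψ ∘ₗ g) ≤ I := by
    rw [range_comp]
    calc (range g).map ψ ≤ (I • ⊤ : Submodule R N).map ψ := Submodule.map_mono hg
      _ = I • (⊤ : Submodule R N).map ψ := Submodule.map_smul'' ..
      _ ≤ I := Submodule.smul_le.mpr fun a ha b _ => Ideal.mul_mem_right b I ha
  simpa [rTensor_comp_apply, hz, hx] using lid_rTensor_mem_smul_top hψg z

end TensorProduct

theorem mem_map_of_mem_smul_top_frobMod {R : Type u} [CommRing R] (f : R →+* R) {I : Ideal R}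
    {u : R} (hu : (show frobMod f from u) ∈ I • (⊤ : Submodule R (frobMod f))) :
    u ∈ I.map f :=
  Submodule.smul_induction_on hu
    (fun _ ha _ _ => Ideal.mul_mem_right _ _ (Ideal.mem_map_of_mem f ha)) fun _ _ => add_mem

theorem HomologicalComplex.not_exactAt_tensorRight_of_smul_top {R : Type u} [CommRing R]
    {ι : Type*} {c : ComplexShape ι} (L : HomologicalComplex (ModuleCat.{u} R) c)
    (M : ModuleCat.{u} R) {I : Ideal R} (hd : ∀ i k, range (L.d i k).hom ≤ I • ⊤) {j : ι}
    {ψ : L.X j →ₗ[R] R} {x : L.X j} (hx : ψ x = 1) {u : M} (hu : ∀ a ∈ I, a • u = 0)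
    (hu' : u ∉ I • (⊤ : Submodule R M)) :
    ¬ (((MonoidalCategory.tensorRight M).mapHomologicalComplex c).obj L).ExactAt j := by
  rw [HomologicalComplex.exactAt_iff' _ (c.prev j) j (c.next j) rfl rfl,
    ShortComplex.moduleCat_exact_iff]
  intro h
  obtain ⟨z, hz⟩ := h (x ⊗ₜ u) (tmul_eq_zero_of_mem_smul_top hu (hd j _ ⟨x, rfl⟩))
  exact hu' (mem_smul_top_of_tmul_mem_range_rTensor (hd _ j) hx ⟨z, hz⟩)

theorem stmt3_general {R : Type u} [CommRing R] [IsLocalRing R]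
    (p : ℕ)
    (c : ℕ)
    (hc : ¬ ((IsLocalRing.maximalIdeal R).annihilator ≤ IsLocalRing.maximalIdeal R ^ c))
    (r : ℕ) (hr : c < p ^ r) (f : R →+* R) (hf : ∀ a, f a = a ^ p ^ r)
    (L : ChainComplex (ModuleCat.{u} R) ℕ)
    (hfree : ∀ n, Module.Free R (L.X n))
    (hmin : ∀ n, LinearMap.range (L.d (n + 1) n).hom ≤
      IsLocalRing.maximalIdeal R • (⊤ : Submodule R (L.X n)))
    (j : ℕ) :
    Subsingleton
        ((((MonoidalCategory.tensorRight (frobMod f)).mapHomologicalComplex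
          (ComplexShape.down ℕ)).obj L).homology j)
      ↔ Subsingleton (L.X j) := by
  set m := IsLocalRing.maximalIdeal R
  rw [← ModuleCat.isZero_iff_subsingleton, ← HomologicalComplex.exactAt_iff_isZero_homology]
  constructor
  · intro hexact
    by_contra hnt
    rw [not_subsingleton_iff_nontrivial] at hnt
    obtain ⟨u, hu_soc, hu_not⟩ := SetLike.not_le_iff_exists.mp hc
    have hd : ∀ i k, range (L.d i k).hom ≤ m • ⊤ := by
      intro i k
      by_cases hik : (ComplexShape.down ℕ).Rel i k
      · obtain rfl : i = k + 1 := hik.symm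
        exact hmin k
      · simp [L.shape i k hik]
    have hu : ∀ a ∈ m, a • (show frobMod f from u) = 0 := fun a ha => by
      show f a * u = 0
      rw [hf, mul_comm]
      exact Submodule.mem_annihilator.mp hu_soc _ (Ideal.pow_mem_of_mem m ha _ (by omega))
    have hmap : m.map f ≤ m ^ c := Ideal.map_le_iff_le_comap.mpr fun a ha => by
      rw [Ideal.mem_comap, hf]
      exact Ideal.pow_le_pow_right hr.le (Ideal.pow_mem_pow ha _)
    let b := Module.Free.chooseBasis R (L.X j)
    obtain ⟨i⟩ := b.index_nonempty
    have hbi : b.coord i (b i) = 1 := by simp [b.coord_apply]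
    exact L.not_exactAt_tensorRight_of_smul_top (frobMod f) hd hbi hu
      (fun h => hu_not (hmap (mem_map_of_mem_smul_top_frobMod f h))) hexact
  · intro hX
    exact .of_isZero (ModuleCat.isZero_of_iff_subsingleton.mpr inferInstance)

/-- Let `(R, m)` be a Noetherian local commutative ring of prime
characteristic `p` with `depth R = 0`, let `c = c(R)` be the smallest positive integer `s`
such that the socle `(0 : m)_R` is not contained in `m^s`, and let `r` satisfy `p^r > c(R)`.
If `L_•` is a chain complex of finitely generated free `R`-modules whose differentials
satisfy `d(L_{n+1}) ⊆ m • L_n`, then for every `j` the `j`-th homology of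
`L_• ⊗_R ^{φ^r}R` vanishes iff `L_j = 0`. -/
theorem stmt3 {R : Type u} [CommRing R] [IsNoetherianRing R] [IsLocalRing R]
    (p : ℕ) (hp : p.Prime) [CharP R p]
    (hdepth : depthWrt R (IsLocalRing.maximalIdeal R) = 0)
    (c : ℕ) (hc0 : 0 < c)
    (hc : ¬ ((IsLocalRing.maximalIdeal R).annihilator ≤ IsLocalRing.maximalIdeal R ^ c))
    (hcmin : ∀ s : ℕ, 0 < s → s < c →
      (IsLocalRing.maximalIdeal R).annihilator ≤ IsLocalRing.maximalIdeal R ^ s)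
    (r : ℕ) (hr : c < p ^ r) (f : R →+* R) (hf : ∀ a, f a = a ^ p ^ r)
    (L : ChainComplex (ModuleCat.{u} R) ℕ)
    (hfree : ∀ n, Module.Free R (L.X n)) (hfg : ∀ n, Module.Finite R (L.X n))
    (hmin : ∀ n, LinearMap.range (L.d (n + 1) n).hom ≤
      IsLocalRing.maximalIdeal R • (⊤ : Submodule R (L.X n)))
    (j : ℕ) :
    Subsingleton
        ((((MonoidalCategory.tensorRight (frobMod f)).mapHomologicalComplex
          (ComplexShape.down ℕ)).obj L).homology j)
      ↔ Subsingleton (L.X j) :=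
  stmt3_general p c hc r hr f hf L hfree hmin j
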